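/- Let W be a finite antipodal set in ℝ^k, i.e., for every pair of distinct points x, y ∈ W there exists a nonzero linear functional f : ℝ^k → ℝ with f(x) < f(y) and f(x) ≤ f(w) ≤ f(y) for all w ∈ W. Then W has at most 2^k elements. -/

import Mathlib

/-!
Following Danzer and Grünbaum, let `K` be the convex hull of `W` and shrink it by `1/2` towards
each point of `W`. The `#W` copies lie in `K` and each has volume `2⁻ᵈ vol K`. For `x ≠ y` in `W`
the functional `f` witnessing antipodality puts the copy at `x` in `f ≤ (f x + f y) / 2` and the
copy at `y` in `f ≥ (f x + f y) / 2`, so the copies overlap only in null sets and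
`#W 2⁻ᵈ vol K ≤ vol K`. This needs `vol K > 0`, so in general one first passes to the affine span
of `W`.
-/

open MeasureTheory Module Set AffineMap

def IsAntipodal {E : Type*} [AddCommGroup E] [Module ℝ E] (W : Set E) : Prop :=
  ∀ x ∈ W, ∀ y ∈ W, x ≠ y → ∃ f : E →ₗ[ℝ] ℝ, f x < f y ∧ ∀ w ∈ W, f x ≤ f w ∧ f w ≤ f y

theorem MeasureTheory.Measure.addHaar_preimage_singleton_linearMap {E : Type*}
    [NormedAddCommGroup E] [NormedSpace ℝ E] [MeasurableSpace E] [BorelSpace E]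
    [FiniteDimensional ℝ E] (μ : Measure E) [μ.IsAddHaarMeasure] {f : E →ₗ[ℝ] ℝ} (hf : f ≠ 0)
    (c : ℝ) : μ (f ⁻¹' {c}) = 0 := by
  change μ (f.toAffineMap ⁻¹' {c}) = 0
  rw [← AffineSubspace.coe_affineSpan_singleton ℝ ℝ c, ← AffineSubspace.coe_comap]
  refine addHaar_affineSubspace μ _ fun htop => hf ?_
  have hconst : ∀ u, f u = c := fun u => by
    have := htop ▸ AffineSubspace.mem_top ℝ E u
    rwa [← SetLike.mem_coe, AffineSubspace.coe_comap,
      AffineSubspace.coe_affineSpan_singleton] at this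
  ext u
  rw [hconst, ← hconst 0, map_zero, LinearMap.zero_apply]

namespace IsAntipodal

variable {E F : Type*}

section Linear

variable [AddCommGroup E] [Module ℝ E] [AddCommGroup F] [Module ℝ F] {W : Set E}

theorem preimage (hW : IsAntipodal W) (φ : F →ᵃ[ℝ] E) (hφ : Function.Injective φ) :
    IsAntipodal (φ ⁻¹' W) := by
  intro x hx y hy hxy
  obtain ⟨f, hlt, hbetween⟩ := hW _ hx _ hy (hφ.ne hxy)
  have hdiff : ∀ a b, (f ∘ₗ φ.linear) a - (f ∘ₗ φ.linear) b = f (φ a) - f (φ b) := fun a b => by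
    simpa only [vsub_eq_sub, map_sub, LinearMap.comp_apply] using congrArg f (φ.linearMap_vsub a b)
  refine ⟨f ∘ₗ φ.linear, by linarith [hdiff x y], fun w hw => ?_⟩
  have := hbetween _ hw
  constructor <;> linarith [hdiff x w, hdiff w y]

end Linear

section Measure

variable [NormedAddCommGroup E] [NormedSpace ℝ E] [MeasurableSpace E] [BorelSpace E]
  [FiniteDimensional ℝ E] (μ : Measure E) [μ.IsAddHaarMeasure]

theorem pairwise_aedisjoint_homothety {W : Set E} (hW : IsAntipodal W) :
    W.Pairwise
      (Function.onFun (AEDisjoint μ) fun w => homothety w (2⁻¹ : ℝ) '' convexHull ℝ W) := by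
  intro x hx y hy hxy
  obtain ⟨f, hlt, hbetween⟩ := hW x hx y hy hxy
  have hslab : convexHull ℝ W ⊆ f ⁻¹' Icc (f x) (f y) :=
    convexHull_min hbetween ((convex_Icc _ _).linear_preimage f)
  have hhalf : ∀ w a, f (homothety w (2⁻¹ : ℝ) a) = (f w + f a) / 2 := fun w a => by
    simp only [homothety_apply, vsub_eq_sub, vadd_eq_add, map_add, map_smul, map_sub, smul_eq_mul]
    ring
  refine measure_mono_null ?_ (Measure.addHaar_preimage_singleton_linearMap μ (f := f)
    (by rintro rfl; simp at hlt) ((f x + f y) / 2))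
  rintro _ ⟨⟨a, ha, rfl⟩, ⟨b, hb, hba⟩⟩
  have ha' := hslab ha
  have hb' := hslab hb
  have := congrArg f hba
  simp only [mem_preimage, mem_Icc, mem_singleton_iff, hhalf] at ha' hb' this ⊢
  linarith

theorem sum_measure_homothety_le {W : Finset E} (hW : IsAntipodal (W : Set E)) :
    ∑ w ∈ W, μ (homothety w (2⁻¹ : ℝ) '' convexHull ℝ W) ≤ μ (convexHull ℝ W) := by
  have hK := W.finite_toSet.isCompact_convexHull (𝕜 := ℝ)
  rw [← measure_biUnion_finset₀ (hW.pairwise_aedisjoint_homothety μ) fun w _ =>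
    (hK.image (homothety_continuous w _)).measurableSet.nullMeasurableSet]
  refine measure_mono (iUnion₂_subset fun w hw => ?_)
  rintro _ ⟨a, ha, rfl⟩
  rw [homothety_eq_lineMap]
  exact (convex_convexHull ℝ _).lineMap_mem (subset_convexHull ℝ _ hw) ha
    ⟨by norm_num, by norm_num⟩

end Measure

variable [NormedAddCommGroup E] [NormedSpace ℝ E] [FiniteDimensional ℝ E]

theorem card_le_two_pow_finrank_of_affineSpan_eq_top {W : Finset E}
    (hW : IsAntipodal (W : Set E)) (hspan : affineSpan ℝ (W : Set E) = ⊤) :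
    W.card ≤ 2 ^ finrank ℝ E := by
  borelize E
  set μ : Measure E := Measure.addHaar
  set K := convexHull ℝ (W : Set E)
  have hK0 : μ K ≠ 0 := (Measure.measure_pos_of_nonempty_interior μ
    (interior_convexHull_nonempty_iff_affineSpan_eq_top.2 hspan)).ne'
  have hKtop : μ K ≠ ⊤ := (W.finite_toSet.isCompact_convexHull (𝕜 := ℝ)).measure_lt_top.ne
  have hscale : ENNReal.ofReal |(2⁻¹ : ℝ) ^ finrank ℝ E| = (2 ^ finrank ℝ E)⁻¹ := by
    rw [abs_of_nonneg (by positivity), ENNReal.ofReal_pow (by norm_num),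
      ENNReal.ofReal_inv_of_pos two_pos, ENNReal.ofReal_ofNat, ENNReal.inv_pow]
  have h := hW.sum_measure_homothety_le μ
  simp only [Measure.addHaar_image_homothety, hscale, Finset.sum_const, nsmul_eq_mul] at h
  rw [← mul_assoc] at h
  have hcard := (ENNReal.mul_le_mul_iff_left hK0 hKtop).1 (h.trans_eq (one_mul _).symm)
  rw [ENNReal.mul_inv_le_iff (by positivity) (by simp), one_mul] at hcard
  exact_mod_cast hcard

theorem card_le_two_pow_finrank {W : Finset E} (hW : IsAntipodal (W : Set E)) :
    W.card ≤ 2 ^ finrank ℝ E := by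
  classical
  obtain rfl | ⟨w₀, hw₀⟩ := W.eq_empty_or_nonempty
  · simp
  set V := vectorSpan ℝ (W : Set E)
  let φ : V →ᵃ[ℝ] E := ⟨fun v => v + w₀, V.subtype, fun p v => by simp [add_assoc]⟩
  have hφ : Function.Injective φ := fun a b h => Subtype.ext (add_right_cancel h)
  have hrange : (W : Set E) ⊆ range φ := fun x hx =>
    ⟨⟨x - w₀, vsub_mem_vectorSpan ℝ hx hw₀⟩, sub_add_cancel x w₀⟩
  set W' := W.preimage φ hφ.injOn
  have himage : φ '' W' = W := by rw [Finset.coe_preimage, image_preimage_eq_of_subset hrange]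
  have hcard : W'.card = W.card := by
    rw [Finset.card_preimage, Finset.filter_true_of_mem fun x hx => hrange hx]
  have hspan : affineSpan ℝ (W' : Set V) = ⊤ := by
    have hne : (W' : Set V).Nonempty :=
      ⟨0, Finset.mem_preimage.2 (show ((0 : V) : E) + w₀ ∈ W by simpa using hw₀)⟩
    rw [AffineSubspace.affineSpan_eq_top_iff_vectorSpan_eq_top_of_nonempty ℝ V V hne]
    apply Submodule.map_injective_of_injective V.injective_subtype
    rw [Submodule.map_subtype_top, show V.subtype = φ.linear from rfl, φ.map_vectorSpan, himage]
  have hW' : IsAntipodal (W' : Set V) := by simpa [W'] using hW.preimage φ hφ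
  calc W.card = W'.card := hcard.symm
    _ ≤ 2 ^ finrank ℝ V := hW'.card_le_two_pow_finrank_of_affineSpan_eq_top hspan
    _ ≤ 2 ^ finrank ℝ E := Nat.pow_le_pow_right two_pos (Submodule.finrank_le V)

end IsAntipodal

/-- A finite antipodal set in `ℝ^k` has at most `2 ^ k` elements. -/
theorem antipodal_card_le_two_pow (k : ℕ) (W : Finset (EuclideanSpace ℝ (Fin k)))
    (hW : ∀ x ∈ W, ∀ y ∈ W, x ≠ y →
      ∃ f : EuclideanSpace ℝ (Fin k) →ₗ[ℝ] ℝ, f ≠ 0 ∧ f x < f y ∧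
        ∀ w ∈ W, f x ≤ f w ∧ f w ≤ f y) :
    W.card ≤ 2 ^ k := by
  have hanti : IsAntipodal (W : Set (EuclideanSpace ℝ (Fin k))) := fun x hx y hy hxy =>
    let ⟨f, _, hlt, hbetween⟩ := hW x hx y hy hxy
    ⟨f, hlt, hbetween⟩
  simpa [finrank_euclideanSpace_fin] using hanti.card_le_two_pow_finrank
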